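/- arXiv:2007.03814 — 6 statements merged into one kernel-verified Lean document; each statement's English description precedes it below -/
import Mathlib

section
/- For probability measures Q and P on a measurable space with Q absolutely continuous with respect to P, for any α > 1 and any bounded measurable function g, (1/(α-1)) log ∫ e^{(α-1)g} dQ ≤ (1/α) log ∫ e^{αg} dP + (1/(α(α-1))) log ∫ (dQ/dP)^α dP. -/
open MeasureTheory Real
open scoped ENNReal

/-!
Since `∫ e^{(α-1)g} dQ = ∫ e^{(α-1)g} (dQ/dP) dP`, Hölder's inequality with the conjugate exponents
`α/(α-1)` and `α` bounds it by `(∫ e^{αg} dP)^{(α-1)/α} (∫ (dQ/dP)^α dP)^{1/α}`. Taking `ENNReal.log`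
(so that an infinite last integral is allowed) and multiplying by `(α-1)⁻¹` gives the bound.
-/

lemma integrable_exp_mul_of_abs_le {Ω : Type*} [MeasurableSpace Ω] (μ : Measure Ω)
    [IsFiniteMeasure μ] {g : Ω → ℝ} (hg : Measurable g) {C : ℝ} (hC : ∀ x, |g x| ≤ C) (c : ℝ) :
    Integrable (fun x => exp (c * g x)) μ := by
  refine .of_bound (by fun_prop) (exp (|c| * C)) (.of_forall fun x => ?_)
  rw [norm_of_nonneg (exp_pos _).le, exp_le_exp]
  calc c * g x ≤ |c| * |g x| := abs_mul c (g x) ▸ le_abs_self _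
    _ ≤ |c| * C := mul_le_mul_of_nonneg_left (hC x) (abs_nonneg c)

theorem lintegral_le_lintegral_rpow_mul_lintegral_rnDeriv_rpow {Ω : Type*} [MeasurableSpace Ω]
    {μ ν : Measure Ω} [μ.HaveLebesgueDecomposition ν] (hμν : μ ≪ ν) {p q : ℝ}
    (hpq : p.HolderConjugate q) {f : Ω → ℝ≥0∞} (hf : AEMeasurable f ν) :
    ∫⁻ x, f x ∂μ ≤ (∫⁻ x, f x ^ p ∂ν) ^ p⁻¹ * (∫⁻ x, μ.rnDeriv ν x ^ q ∂ν) ^ q⁻¹ := by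
  rw [← lintegral_rnDeriv_mul hμν hf, inv_eq_one_div, inv_eq_one_div]
  simpa only [Pi.mul_apply, mul_comm] using
    ENNReal.lintegral_mul_le_Lp_mul_Lq ν hpq hf (μ.measurable_rnDeriv ν).aemeasurable

theorem ofReal_integral_exp_le_rpow_mul_lintegral_rnDeriv_rpow {Ω : Type*} [MeasurableSpace Ω]
    {Q P : Measure Ω} [Q.HaveLebesgueDecomposition P] (hQP : Q ≪ P) {α : ℝ} (hα : 1 < α)
    {g : Ω → ℝ} (hg : Measurable g) (hQg : Integrable (fun x => exp ((α - 1) * g x)) Q)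
    (hPg : Integrable (fun x => exp (α * g x)) P) :
    ENNReal.ofReal (∫ x, exp ((α - 1) * g x) ∂Q) ≤
      ENNReal.ofReal (∫ x, exp (α * g x) ∂P) ^ ((α - 1) / α) *
        (∫⁻ x, Q.rnDeriv P x ^ α ∂P) ^ α⁻¹ := by
  have hpq : (α / (α - 1)).HolderConjugate α := (Real.HolderConjugate.conjExponent hα).symm
  rw [ofReal_integral_eq_lintegral_ofReal hQg (.of_forall fun _ => (exp_pos _).le),
    ofReal_integral_eq_lintegral_ofReal hPg (.of_forall fun _ => (exp_pos _).le),
    ← inv_div]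
  convert lintegral_le_lintegral_rpow_mul_lintegral_rnDeriv_rpow hQP hpq
    (f := fun x => ENNReal.ofReal (exp ((α - 1) * g x))) (by fun_prop) using 5 with x
  rw [ENNReal.ofReal_rpow_of_pos (exp_pos _), ← exp_mul]
  field_simp [(sub_pos.2 hα).ne']

/-- For probability measures `Q ≪ P`, `α > 1` and bounded measurable `g`,
`(1/(α-1)) log ∫ e^{(α-1)g} dQ ≤ (1/α) log ∫ e^{αg} dP + (1/(α(α-1))) log ∫ (dQ/dP)^α dP`,
where the last term (hence the RHS) may be `+∞`. -/
theorem renyi_holder_bound {Ω : Type*} [MeasurableSpace Ω]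
    (Q P : Measure Ω) [IsProbabilityMeasure Q] [IsProbabilityMeasure P]
    (hQP : Q ≪ P) {α : ℝ} (hα : 1 < α)
    (g : Ω → ℝ) (hg : Measurable g) (hgb : ∃ C, ∀ x, |g x| ≤ C) :
    (((α - 1)⁻¹ * Real.log (∫ x, Real.exp ((α - 1) * g x) ∂Q) : ℝ) : EReal)
      ≤ ((α⁻¹ * Real.log (∫ x, Real.exp (α * g x) ∂P) : ℝ) : EReal)
        + ((α * (α - 1))⁻¹ : ℝ) * ENNReal.log (∫⁻ x, (Q.rnDeriv P x) ^ α ∂P) := by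
  obtain ⟨C, hC⟩ := hgb
  have hQg := integrable_exp_mul_of_abs_le Q hg hC (α - 1)
  have hPg := integrable_exp_mul_of_abs_le P hg hC α
  have hlog := ENNReal.log_monotone
    (ofReal_integral_exp_le_rpow_mul_lintegral_rnDeriv_rpow hQP hα hg hQg hPg)
  rw [ENNReal.log_mul_add, ENNReal.log_rpow, ENNReal.log_rpow,
    ENNReal.log_ofReal_of_pos (integral_exp_pos hQg),
    ENNReal.log_ofReal_of_pos (integral_exp_pos hPg)] at hlog
  have hc : (0 : EReal) ≤ ((α - 1)⁻¹ : ℝ) := by exact_mod_cast (inv_pos.2 (sub_pos.2 hα)).le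
  calc _ = ((α - 1)⁻¹ : ℝ) * (Real.log (∫ x, exp ((α - 1) * g x) ∂Q) : EReal) := EReal.coe_mul _ _
    _ ≤ _ := mul_le_mul_of_nonneg_left hlog hc
    _ = _ := by
      rw [EReal.left_distrib_of_nonneg_of_ne_top hc (EReal.coe_ne_top _), ← mul_assoc,
        ← mul_assoc, ← EReal.coe_mul, ← EReal.coe_mul, ← EReal.coe_mul]
      congr 3 <;> field_simp [(sub_pos.2 hα).ne', (one_pos.trans hα).ne']
end

section
/- For probability measures Q and P on a measurable space, for any α ∈ (0,1) and any bounded measurable function g, (1/(α-1)) log ∫ e^{(α-1)g} dQ - (1/α) log ∫ e^{αg} dP ≤ R_α(Q‖P), where R_α(Q‖P) = (1/(α(α-1))) log ∫_{p>0} q^α p^{1-α} dν for any common dominating σ-finite measure ν with dQ = q dν, dP = p dν. -/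
open MeasureTheory Real
open scoped ENNReal NNReal

/-! The weights `u = e^{(α-1)g}` and `v = e^{αg}` satisfy `u^α v^{1-α} = 1`, so
`q^α p^{1-α} = (q u)^α (p v)^{1-α}` and Hölder's inequality with exponents `1/α`, `1/(1-α)` gives
`∫ q^α p^{1-α} dν ≤ (∫ u dQ)^α (∫ v dP)^{1-α}`. Taking logarithms and multiplying by the negative
constant `1/(α(α-1))` reverses this into the claimed bound. -/

theorem lintegral_rpow_mul_rpow_le_of_rpow_mul_rpow_eq_one {Ω : Type*} [MeasurableSpace Ω]
    {ν : Measure Ω} {q p u v : Ω → ℝ≥0∞} (hq : AEMeasurable q ν) (hp : AEMeasurable p ν)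
    (hu : AEMeasurable u ν) (hv : AEMeasurable v ν) {α : ℝ} (hα0 : 0 ≤ α) (hα1 : α ≤ 1)
    (huv : ∀ x, u x ^ α * v x ^ (1 - α) = 1) :
    ∫⁻ x, q x ^ α * p x ^ (1 - α) ∂ν
      ≤ (∫⁻ x, q x * u x ∂ν) ^ α * (∫⁻ x, p x * v x ∂ν) ^ (1 - α) := by
  have hsplit : ∀ x, q x ^ α * p x ^ (1 - α) = (q x * u x) ^ α * (p x * v x) ^ (1 - α) := by
    intro x
    rw [ENNReal.mul_rpow_of_nonneg _ _ hα0, ENNReal.mul_rpow_of_nonneg _ _ (sub_nonneg.2 hα1),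
      mul_mul_mul_comm, huv, mul_one]
  simp_rw [hsplit]
  exact ENNReal.lintegral_mul_norm_pow_le (hq.mul hu) (hp.mul hv) hα0 (sub_nonneg.2 hα1)
    (add_sub_cancel α 1)

theorem ofReal_exp_rpow_mul_ofReal_exp_rpow (α t : ℝ) :
    ENNReal.ofReal (exp ((α - 1) * t)) ^ α * ENNReal.ofReal (exp (α * t)) ^ (1 - α) = 1 := by
  rw [ENNReal.ofReal_rpow_of_pos (exp_pos _), ENNReal.ofReal_rpow_of_pos (exp_pos _),
    ← exp_mul, ← exp_mul, ← ENNReal.ofReal_mul (exp_pos _).le, ← exp_add,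
    show (α - 1) * t * α + α * t * (1 - α) = 0 by ring, exp_zero, ENNReal.ofReal_one]

theorem lintegral_mul_ofReal_eq_ofReal_integral_withDensity {Ω : Type*} [MeasurableSpace Ω]
    {ν : Measure Ω} {q : Ω → ℝ≥0∞} (hq : Measurable q) {f : Ω → ℝ} (hf : Measurable f)
    (hf_int : Integrable f (ν.withDensity q)) (hf0 : 0 ≤ f) :
    ∫⁻ x, q x * ENNReal.ofReal (f x) ∂ν = ENNReal.ofReal (∫ x, f x ∂ν.withDensity q) := by
  rw [ofReal_integral_eq_lintegral_ofReal hf_int (ae_of_all _ hf0),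
    lintegral_withDensity_eq_lintegral_mul₀ hq.aemeasurable (by fun_prop)]
  rfl

theorem coe_mul_log_le_mul_log_of_le_ofReal {c D : ℝ} (hc : c ≤ 0) (hD : 0 < D) {I : ℝ≥0∞}
    (hI : I ≤ ENNReal.ofReal D) :
    ((c * Real.log D : ℝ) : EReal) ≤ c * ENNReal.log I := by
  rw [EReal.coe_mul, ← ENNReal.log_ofReal_of_pos hD, mul_comm, mul_comm (c : EReal)]
  exact EReal.mul_le_mul_of_nonpos_right (ENNReal.log_le_log hI) (EReal.coe_nonpos.2 hc)

theorem inv_mul_log_rpow_mul_rpow {α A B : ℝ} (hα0 : α ≠ 0) (hα1 : α ≠ 1) (hA : 0 < A)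
    (hB : 0 < B) :
    (α * (α - 1))⁻¹ * Real.log (A ^ α * B ^ (1 - α))
      = (α - 1)⁻¹ * Real.log A - α⁻¹ * Real.log B := by
  have hα1' : α - 1 ≠ 0 := sub_ne_zero.2 hα1
  rw [Real.log_mul (Real.rpow_pos_of_pos hA _).ne' (Real.rpow_pos_of_pos hB _).ne',
    Real.log_rpow hA, Real.log_rpow hB]
  field_simp
  ring

theorem renyi_lower_bound_alpha_lt_one_general {Ω : Type*} [MeasurableSpace Ω]
    (Q P ν : Measure Ω) [IsProbabilityMeasure Q] [IsProbabilityMeasure P]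
    (q p : Ω → ℝ≥0∞) (hq : Measurable q) (hp : Measurable p)
    (hQ : Q = ν.withDensity q) (hP : P = ν.withDensity p)
    {α : ℝ} (hα0 : 0 < α) (hα1 : α < 1)
    (g : Ω → ℝ) (hg : Measurable g) (hgb : ∃ C, ∀ x, |g x| ≤ C) :
    (((α - 1)⁻¹ * Real.log (∫ x, Real.exp ((α - 1) * g x) ∂Q)
        - α⁻¹ * Real.log (∫ x, Real.exp (α * g x) ∂P) : ℝ) : EReal)
      ≤ ((α * (α - 1))⁻¹ : ℝ)
          * ENNReal.log (∫⁻ x in {x | p x ≠ 0}, (q x) ^ α * (p x) ^ (1 - α) ∂ν) := by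
  obtain ⟨C, hC⟩ := hgb
  have hexp_int : ∀ (μ : Measure Ω) [IsFiniteMeasure μ] (t : ℝ),
      Integrable (fun x => exp (t * g x)) μ := fun μ _ t =>
    ProbabilityTheory.integrable_exp_mul_of_mem_Icc hg.aemeasurable
      (ae_of_all _ fun x => abs_le.1 (hC x))
  have hexp_meas : ∀ t : ℝ, Measurable fun x => exp (t * g x) := fun t => by fun_prop
  set A := ∫ x, exp ((α - 1) * g x) ∂Q
  set B := ∫ x, exp (α * g x) ∂P
  have hA : 0 < A := integral_exp_pos (hexp_int Q _)
  have hB : 0 < B := integral_exp_pos (hexp_int P _)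
  have hHolder : ∫⁻ x in {x | p x ≠ 0}, q x ^ α * p x ^ (1 - α) ∂ν
      ≤ ENNReal.ofReal (A ^ α * B ^ (1 - α)) := calc
    _ ≤ ∫⁻ x, q x ^ α * p x ^ (1 - α) ∂ν := setLIntegral_le_lintegral _ _
    _ ≤ (∫⁻ x, q x * ENNReal.ofReal (exp ((α - 1) * g x)) ∂ν) ^ α
          * (∫⁻ x, p x * ENNReal.ofReal (exp (α * g x)) ∂ν) ^ (1 - α) :=
      lintegral_rpow_mul_rpow_le_of_rpow_mul_rpow_eq_one hq.aemeasurable hp.aemeasurable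
        (by fun_prop) (by fun_prop) hα0.le hα1.le
        fun x => ofReal_exp_rpow_mul_ofReal_exp_rpow α (g x)
    _ = ENNReal.ofReal A ^ α * ENNReal.ofReal B ^ (1 - α) := by
      rw [lintegral_mul_ofReal_eq_ofReal_integral_withDensity hq (hexp_meas _)
          (hQ ▸ hexp_int Q _) fun _ => (exp_pos _).le,
        lintegral_mul_ofReal_eq_ofReal_integral_withDensity hp (hexp_meas _)
          (hP ▸ hexp_int P _) fun _ => (exp_pos _).le, ← hQ, ← hP]
    _ = ENNReal.ofReal (A ^ α * B ^ (1 - α)) := by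
      rw [ENNReal.ofReal_mul (Real.rpow_nonneg hA.le _), ENNReal.ofReal_rpow_of_pos hA,
        ENNReal.ofReal_rpow_of_pos hB]
  rw [← inv_mul_log_rpow_mul_rpow hα0.ne' hα1.ne hA hB]
  exact coe_mul_log_le_mul_log_of_le_ofReal
    (inv_nonpos.2 (mul_nonpos_of_nonneg_of_nonpos hα0.le (by linarith)))
    (mul_pos (Real.rpow_pos_of_pos hA _) (Real.rpow_pos_of_pos hB _)) hHolder

/-- For `α ∈ (0,1)` and bounded measurable `g`,
`(1/(α-1)) log ∫ e^{(α-1)g} dQ - (1/α) log ∫ e^{αg} dP ≤ R_α(Q‖P)`, where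
`R_α(Q‖P) = (1/(α(α-1))) log ∫_{p>0} q^α p^{1-α} dν` for a common dominating
σ-finite measure `ν` with densities `q`, `p`. -/
theorem renyi_lower_bound_alpha_lt_one {Ω : Type*} [MeasurableSpace Ω]
    (Q P ν : Measure Ω) [IsProbabilityMeasure Q] [IsProbabilityMeasure P] [SigmaFinite ν]
    (q p : Ω → ℝ≥0∞) (hq : Measurable q) (hp : Measurable p)
    (hQ : Q = ν.withDensity q) (hP : P = ν.withDensity p)
    {α : ℝ} (hα0 : 0 < α) (hα1 : α < 1)
    (g : Ω → ℝ) (hg : Measurable g) (hgb : ∃ C, ∀ x, |g x| ≤ C) :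
    (((α - 1)⁻¹ * Real.log (∫ x, Real.exp ((α - 1) * g x) ∂Q)
        - α⁻¹ * Real.log (∫ x, Real.exp (α * g x) ∂P) : ℝ) : EReal)
      ≤ ((α * (α - 1))⁻¹ : ℝ)
          * ENNReal.log (∫⁻ x in {x | p x ≠ 0}, (q x) ^ α * (p x) ^ (1 - α) ∂ν) :=
  renyi_lower_bound_alpha_lt_one_general Q P ν q p hq hp hQ hP hα0 hα1 g hg hgb
end

section
/- For α ∈ (0,1) and probability measures Q, P with common dominating σ-finite measure ν (densities q, p), the supremum over bounded measurable g of {(1/(α-1)) log ∫ e^{(α-1)g} dQ - (1/α) log ∫ e^{αg} dP} equals (1/(α(α-1))) log ∫_{p>0} q^α p^{1-α} dν. -/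
/-!
Write `A_g = ∫ e^{(α-1)g} dQ` and `B_g = ∫ e^{αg} dP`. The objective equals
`(α(α-1))⁻¹ log (A_g^α B_g^{1-α})`, whose coefficient is negative, so the supremum is
`(α(α-1))⁻¹ log` of the infimum of `A_g^α B_g^{1-α}`. Pointwise
`q^α p^{1-α} = (q e^{(α-1)g})^α (p e^{αg})^{1-α}`, so Hölder's inequality gives
`∫ q^α p^{1-α} dν ≤ A_g^α B_g^{1-α}` for every `g`. Equality holds formally at `g = log (q / p)`;
its truncations to `[-n, n]` are bounded, and by dominated convergence `A` and `B` both tend to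
`∫ q^α p^{1-α} dν` along them. The case where this integral vanishes (supremum `⊤`) needs no
separate treatment, because `x ↦ c log x` is continuous from `[0, ∞]` to `EReal`.
-/

open MeasureTheory ProbabilityTheory Real Filter Set
open scoped ENNReal NNReal Topology

noncomputable def logRatioClamp (n : ℕ) (a b : ℝ≥0∞) : ℝ :=
  if b = 0 then n else if a = 0 then -n
  else max (-n) (min n (Real.log a.toReal - Real.log b.toReal))

section Scalar

variable {a b : ℝ≥0∞}

lemma abs_logRatioClamp_le (n : ℕ) (a b : ℝ≥0∞) : |logRatioClamp n a b| ≤ n := by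
  have hn : (0 : ℝ) ≤ n := n.cast_nonneg
  unfold logRatioClamp
  split_ifs
  · exact (abs_of_nonneg hn).le
  · rw [abs_neg, abs_of_nonneg hn]
  · exact abs_le.2 ⟨le_max_left _ _, max_le (by linarith) (min_le_left _ _)⟩

lemma logRatioClamp_swap (ha : a ≠ 0) (n : ℕ) (b : ℝ≥0∞) :
    logRatioClamp n a b = -logRatioClamp n b a := by
  unfold logRatioClamp
  by_cases hb : b = 0
  · simp [hb, ha]
  · simp only [hb, ha, if_false]
    rw [← neg_sub (Real.log a.toReal)]
    have hn : (0 : ℝ) ≤ n := n.cast_nonneg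
    simp only [max_def, min_def]
    split_ifs <;> linarith

lemma logRatioClamp_eventually_eq (ha : a ≠ 0) (hb : b ≠ 0) :
    ∀ᶠ n in atTop, logRatioClamp n a b = Real.log a.toReal - Real.log b.toReal := by
  set t := Real.log a.toReal - Real.log b.toReal
  filter_upwards [eventually_ge_atTop ⌈|t|⌉₊] with n hn
  obtain ⟨h₁, h₂⟩ := abs_le.1 ((Nat.le_ceil _).trans (Nat.cast_le.2 hn))
  rw [logRatioClamp, if_neg hb, if_neg ha, min_eq_right h₂, max_eq_right h₁]

lemma exp_mul_max_min_le {β N : ℝ} (hβ : 0 ≤ β) (hN : 0 ≤ N) (t : ℝ) :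
    exp (β * max (-N) (min N t)) ≤ 1 + exp (β * t) := by
  rcases le_total t 0 with ht | ht
  · have : β * max (-N) (min N t) ≤ 0 :=
      mul_nonpos_of_nonneg_of_nonpos hβ (max_le (by linarith) (min_le_of_right_le ht))
    linarith [exp_le_one_iff.2 this, exp_pos (β * t)]
  · have : β * max (-N) (min N t) ≤ β * t :=
      mul_le_mul_of_nonneg_left (max_le (by linarith) (min_le_right _ _)) hβ
    linarith [exp_le_exp.2 this]

lemma mul_ofReal_exp_mul_log_sub (ha₀ : a ≠ 0) (ha : a ≠ ⊤) (hb₀ : b ≠ 0) (hb : b ≠ ⊤)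
    (β : ℝ) :
    b * ENNReal.ofReal (exp (β * (Real.log a.toReal - Real.log b.toReal)))
      = a ^ β * b ^ (1 - β) := by
  obtain ⟨x, hx, rfl⟩ : ∃ x, 0 < x ∧ a = ENNReal.ofReal x :=
    ⟨a.toReal, ENNReal.toReal_pos ha₀ ha, (ENNReal.ofReal_toReal ha).symm⟩
  obtain ⟨y, hy, rfl⟩ : ∃ y, 0 < y ∧ b = ENNReal.ofReal y :=
    ⟨b.toReal, ENNReal.toReal_pos hb₀ hb, (ENNReal.ofReal_toReal hb).symm⟩
  rw [ENNReal.toReal_ofReal hx.le, ENNReal.toReal_ofReal hy.le, ENNReal.ofReal_rpow_of_pos hx,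
    ENNReal.ofReal_rpow_of_pos hy, ← ENNReal.ofReal_mul hy.le, ← ENNReal.ofReal_mul (by positivity),
    rpow_def_of_pos hx, rpow_def_of_pos hy, ← exp_add]
  nth_rewrite 1 [← exp_log hy]
  rw [← exp_add]
  ring_nf

lemma mul_exp_logRatioClamp_le (ha : a ≠ ⊤) (hb : b ≠ ⊤) {β : ℝ} (hβ : 0 ≤ β) (n : ℕ) :
    b * ENNReal.ofReal (exp (β * logRatioClamp n a b)) ≤ b + a ^ β * b ^ (1 - β) := by
  by_cases hb₀ : b = 0
  · simp [hb₀]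
  by_cases ha₀ : a = 0
  · have : β * -(n : ℝ) ≤ 0 := mul_nonpos_of_nonneg_of_nonpos hβ (by simp)
    calc b * ENNReal.ofReal (exp (β * logRatioClamp n a b))
        ≤ b * 1 := by
          rw [logRatioClamp, if_neg hb₀, if_pos ha₀]
          gcongr
          exact ENNReal.ofReal_le_one.2 (exp_le_one_iff.2 this)
      _ ≤ _ := by rw [mul_one]; exact le_self_add
  calc b * ENNReal.ofReal (exp (β * logRatioClamp n a b))
      ≤ b * ENNReal.ofReal (1 + exp (β * (Real.log a.toReal - Real.log b.toReal))) := by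
        rw [logRatioClamp, if_neg hb₀, if_neg ha₀]
        gcongr
        exact exp_mul_max_min_le hβ n.cast_nonneg _
    _ = b + a ^ β * b ^ (1 - β) := by
        rw [ENNReal.ofReal_add zero_le_one (exp_pos _).le, mul_add, ENNReal.ofReal_one, mul_one,
          mul_ofReal_exp_mul_log_sub ha₀ ha hb₀ hb]

lemma tendsto_mul_exp_logRatioClamp (hb : b ≠ ⊤) (ha : a ≠ ⊤) {β : ℝ} (hβ₀ : 0 < β)
    (hβ₁ : β < 1) :
    Tendsto (fun n : ℕ => b * ENNReal.ofReal (exp (β * logRatioClamp n a b))) atTop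
      (𝓝 (a ^ β * b ^ (1 - β))) := by
  by_cases hb₀ : b = 0
  · simp [hb₀, ENNReal.zero_rpow_of_pos (sub_pos.2 hβ₁)]
  by_cases ha₀ : a = 0
  · have hexp : Tendsto (fun n : ℕ => ENNReal.ofReal (exp (β * -(n : ℝ)))) atTop (𝓝 0) := by
      rw [← ENNReal.ofReal_zero]
      refine (ENNReal.continuous_ofReal.tendsto 0).comp (tendsto_exp_atBot.comp ?_)
      exact (tendsto_const_mul_atBot_of_pos hβ₀).2
        (tendsto_neg_atBot_iff.2 tendsto_natCast_atTop_atTop)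
    simpa [logRatioClamp, hb₀, ha₀, ENNReal.zero_rpow_of_pos hβ₀] using
      ENNReal.Tendsto.const_mul hexp (Or.inr hb)
  refine tendsto_const_nhds.congr' ?_
  filter_upwards [logRatioClamp_eventually_eq ha₀ hb₀] with n hn
  rw [hn, mul_ofReal_exp_mul_log_sub ha₀ ha hb₀ hb]

end Scalar

lemma Measurable.logRatioClamp {Ω : Type*} [MeasurableSpace Ω] {f h : Ω → ℝ≥0∞}
    (hf : Measurable f) (hh : Measurable h) (n : ℕ) :
    Measurable fun x => logRatioClamp n (f x) (h x) := by
  refine Measurable.ite (hh (measurableSet_singleton 0)) measurable_const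
    (Measurable.ite (hf (measurableSet_singleton 0)) measurable_const ?_)
  exact measurable_const.max (measurable_const.min
    ((measurable_log.comp hf.ennreal_toReal).sub (measurable_log.comp hh.ennreal_toReal)))

section Integral

variable {Ω : Type*} [MeasurableSpace Ω] {ν : Measure Ω}

lemma setLIntegral_ne_zero_rpow_mul_rpow {α : ℝ} (hα : α < 1) (q p : Ω → ℝ≥0∞) :
    ∫⁻ x in {x | p x ≠ 0}, q x ^ α * p x ^ (1 - α) ∂ν = ∫⁻ x, q x ^ α * p x ^ (1 - α) ∂ν := by
  refine setLIntegral_eq_of_support_subset fun x hx hpx => hx ?_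
  simp [hpx, ENNReal.zero_rpow_of_pos (sub_pos.2 hα)]

lemma lintegral_ne_top_of_isFiniteMeasure_withDensity {f : Ω → ℝ≥0∞}
    [IsFiniteMeasure (ν.withDensity f)] : ∫⁻ x, f x ∂ν ≠ ⊤ := by
  rw [← setLIntegral_univ, ← withDensity_apply _ MeasurableSet.univ]
  exact measure_ne_top _ _

lemma lintegral_rpow_mul_rpow_ne_top {f h : Ω → ℝ≥0∞} (hf : Measurable f) (hh : Measurable h)
    (hf₁ : ∫⁻ x, f x ∂ν ≠ ⊤) (hh₁ : ∫⁻ x, h x ∂ν ≠ ⊤) {β : ℝ} (hβ₀ : 0 ≤ β) (hβ₁ : β ≤ 1) :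
    ∫⁻ x, f x ^ β * h x ^ (1 - β) ∂ν ≠ ⊤ :=
  ne_top_of_le_ne_top
    (ENNReal.mul_ne_top (ENNReal.rpow_ne_top_of_nonneg hβ₀ hf₁)
      (ENNReal.rpow_ne_top_of_nonneg (sub_nonneg.2 hβ₁) hh₁))
    (ENNReal.lintegral_mul_norm_pow_le hf.aemeasurable hh.aemeasurable hβ₀ (sub_nonneg.2 hβ₁)
      (add_sub_cancel β 1))

lemma tendsto_lintegral_mul_exp_logRatioClamp {f h : Ω → ℝ≥0∞} (hf : Measurable f)
    (hh : Measurable h) (hf₁ : ∫⁻ x, f x ∂ν ≠ ⊤) (hh₁ : ∫⁻ x, h x ∂ν ≠ ⊤) {β : ℝ} (hβ₀ : 0 < β)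
    (hβ₁ : β < 1) :
    Tendsto (fun n : ℕ => ∫⁻ x, h x * ENNReal.ofReal (exp (β * logRatioClamp n (f x) (h x))) ∂ν)
      atTop (𝓝 (∫⁻ x, f x ^ β * h x ^ (1 - β) ∂ν)) := by
  have hf_fin : ∀ᵐ x ∂ν, f x ≠ ⊤ := (ae_lt_top hf hf₁).mono fun _ hx => hx.ne
  have hh_fin : ∀ᵐ x ∂ν, h x ≠ ⊤ := (ae_lt_top hh hh₁).mono fun _ hx => hx.ne
  refine tendsto_lintegral_of_dominated_convergence (fun x => h x + f x ^ β * h x ^ (1 - β))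
    (fun n => hh.mul (ENNReal.measurable_ofReal.comp
      (measurable_exp.comp ((hf.logRatioClamp hh n).const_mul β)))) (fun n => ?_) ?_ ?_
  · filter_upwards [hf_fin, hh_fin] with x hfx hhx
    exact mul_exp_logRatioClamp_le hfx hhx hβ₀.le n
  · rw [lintegral_add_left hh]
    exact ENNReal.add_ne_top.2 ⟨hh₁, lintegral_rpow_mul_rpow_ne_top hf hh hf₁ hh₁ hβ₀.le hβ₁.le⟩
  · filter_upwards [hf_fin, hh_fin] with x hfx hhx
    exact tendsto_mul_exp_logRatioClamp hhx hfx hβ₀ hβ₁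

lemma lintegral_ofReal_exp_withDensity {f : Ω → ℝ≥0∞} (hf : Measurable f) {g : Ω → ℝ}
    (hg : Measurable g) (c : ℝ) :
    ∫⁻ x, ENNReal.ofReal (exp (c * g x)) ∂ν.withDensity f
      = ∫⁻ x, f x * ENNReal.ofReal (exp (c * g x)) ∂ν :=
  lintegral_withDensity_eq_lintegral_mul ν hf
    (ENNReal.measurable_ofReal.comp (measurable_exp.comp (hg.const_mul c)))

end Integral

noncomputable def tiltedMomentProduct {Ω : Type*} [MeasurableSpace Ω] (Q P : Measure Ω) (α : ℝ)
    (g : Ω → ℝ) : ℝ≥0∞ :=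
  (∫⁻ x, ENNReal.ofReal (exp ((α - 1) * g x)) ∂Q) ^ α
    * (∫⁻ x, ENNReal.ofReal (exp (α * g x)) ∂P) ^ (1 - α)

section TiltedMomentProduct

variable {Ω : Type*} [MeasurableSpace Ω] {α : ℝ}

lemma rpow_mul_rpow_eq_tilt (hα₀ : 0 ≤ α) (hα₁ : α ≤ 1) (a b : ℝ≥0∞) (t : ℝ) :
    a ^ α * b ^ (1 - α)
      = (a * ENNReal.ofReal (exp ((α - 1) * t))) ^ α
        * (b * ENNReal.ofReal (exp (α * t))) ^ (1 - α) := by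
  rw [ENNReal.mul_rpow_of_nonneg _ _ hα₀, ENNReal.mul_rpow_of_nonneg _ _ (sub_nonneg.2 hα₁),
    ENNReal.ofReal_rpow_of_pos (exp_pos _), ENNReal.ofReal_rpow_of_pos (exp_pos _), ← exp_mul,
    ← exp_mul, mul_mul_mul_comm, ← ENNReal.ofReal_mul (exp_pos _).le, ← exp_add,
    show (α - 1) * t * α + α * t * (1 - α) = 0 by ring, exp_zero, ENNReal.ofReal_one, mul_one]

lemma lintegral_rpow_mul_rpow_le_tiltedMomentProduct (ν : Measure Ω) {q p : Ω → ℝ≥0∞}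
    (hq : Measurable q) (hp : Measurable p) (hα₀ : 0 ≤ α) (hα₁ : α ≤ 1) {g : Ω → ℝ}
    (hg : Measurable g) :
    ∫⁻ x, q x ^ α * p x ^ (1 - α) ∂ν
      ≤ tiltedMomentProduct (ν.withDensity q) (ν.withDensity p) α g := by
  have hexp (c : ℝ) : Measurable fun x => ENNReal.ofReal (exp (c * g x)) :=
    ENNReal.measurable_ofReal.comp (measurable_exp.comp (hg.const_mul c))
  rw [tiltedMomentProduct, lintegral_ofReal_exp_withDensity hq hg,
    lintegral_ofReal_exp_withDensity hp hg]
  refine (lintegral_congr fun x => rpow_mul_rpow_eq_tilt hα₀ hα₁ _ _ (g x)).trans_le ?_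
  exact ENNReal.lintegral_mul_norm_pow_le (hq.mul (hexp _)).aemeasurable
    (hp.mul (hexp _)).aemeasurable hα₀ (sub_nonneg.2 hα₁) (add_sub_cancel α 1)

lemma tendsto_tiltedMomentProduct_logRatioClamp (ν : Measure Ω) {q p : Ω → ℝ≥0∞}
    (hq : Measurable q) (hp : Measurable p) (hq₁ : ∫⁻ x, q x ∂ν ≠ ⊤) (hp₁ : ∫⁻ x, p x ∂ν ≠ ⊤)
    (hα₀ : 0 < α) (hα₁ : α < 1) :
    Tendsto (fun n => tiltedMomentProduct (ν.withDensity q) (ν.withDensity p) α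
        fun x => logRatioClamp n (q x) (p x)) atTop (𝓝 (∫⁻ x, q x ^ α * p x ^ (1 - α) ∂ν)) := by
  set I := ∫⁻ x, q x ^ α * p x ^ (1 - α) ∂ν
  have hI : I ≠ ⊤ := lintegral_rpow_mul_rpow_ne_top hq hp hq₁ hp₁ hα₀.le hα₁.le
  -- The `A`-factor is the `B`-factor with `q, p, α` exchanged for `p, q, 1 - α`.
  have hA : Tendsto (fun n : ℕ => ∫⁻ x, ENNReal.ofReal (exp ((α - 1) * logRatioClamp n (q x) (p x)))
      ∂ν.withDensity q) atTop (𝓝 I) := by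
    convert tendsto_lintegral_mul_exp_logRatioClamp hp hq hp₁ hq₁ (sub_pos.2 hα₁)
      (sub_lt_self 1 hα₀) using 2 with n
    · rw [lintegral_ofReal_exp_withDensity hq (hq.logRatioClamp hp n)]
      refine lintegral_congr fun x => ?_
      rcases eq_or_ne (q x) 0 with hqx | hqx
      · simp [hqx]
      · rw [logRatioClamp_swap hqx, ← neg_sub 1 α, neg_mul_neg]
    · simp_rw [I, sub_sub_cancel, mul_comm]
  have hB : Tendsto (fun n : ℕ => ∫⁻ x, ENNReal.ofReal (exp (α * logRatioClamp n (q x) (p x)))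
      ∂ν.withDensity p) atTop (𝓝 I) := by
    simp_rw [lintegral_ofReal_exp_withDensity hp (hq.logRatioClamp hp _)]
    exact tendsto_lintegral_mul_exp_logRatioClamp hq hp hq₁ hp₁ hα₀ hα₁
  have hsplit : I = I ^ α * I ^ (1 - α) := by
    rw [← ENNReal.rpow_add_of_nonneg _ _ hα₀.le (sub_nonneg.2 hα₁.le), add_sub_cancel,
      ENNReal.rpow_one]
  rw [hsplit]
  exact ENNReal.Tendsto.mul ((ENNReal.continuous_rpow_const.tendsto I).comp hA)
    (Or.inr (ENNReal.rpow_ne_top_of_nonneg (sub_nonneg.2 hα₁.le) hI))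
    ((ENNReal.continuous_rpow_const.tendsto I).comp hB)
    (Or.inr (ENNReal.rpow_ne_top_of_nonneg hα₀.le hI))

end TiltedMomentProduct

lemma coe_renyiObjective_eq {Ω : Type*} [MeasurableSpace Ω] {Q P : Measure Ω} [NeZero Q]
    [NeZero P] {α : ℝ} (hα₀ : α ≠ 0) (hα₁ : α ≠ 1) {g : Ω → ℝ}
    (hQ : Integrable (fun x => exp ((α - 1) * g x)) Q)
    (hP : Integrable (fun x => exp (α * g x)) P) :
    (((α - 1)⁻¹ * Real.log (∫ x, exp ((α - 1) * g x) ∂Q)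
        - α⁻¹ * Real.log (∫ x, exp (α * g x) ∂P) : ℝ) : EReal)
      = ((α * (α - 1))⁻¹ : ℝ) * ENNReal.log (tiltedMomentProduct Q P α g) := by
  have ha := integral_exp_pos hQ
  have hb := integral_exp_pos hP
  rw [tiltedMomentProduct,
    ← ofReal_integral_eq_lintegral_ofReal hQ (ae_of_all _ fun x => (exp_pos _).le),
    ← ofReal_integral_eq_lintegral_ofReal hP (ae_of_all _ fun x => (exp_pos _).le),
    ENNReal.ofReal_rpow_of_pos ha, ENNReal.ofReal_rpow_of_pos hb,
    ← ENNReal.ofReal_mul (by positivity), ENNReal.log_ofReal_of_pos (by positivity),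
    ← EReal.coe_mul, EReal.coe_eq_coe_iff, Real.log_mul (by positivity) (by positivity),
    Real.log_rpow ha, Real.log_rpow hb]
  have : α - 1 ≠ 0 := sub_ne_zero.2 hα₁
  field_simp
  ring

theorem renyi_sup_eq_alpha_lt_one_general {Ω : Type*} [MeasurableSpace Ω]
    (Q P ν : Measure Ω) [IsProbabilityMeasure Q] [IsProbabilityMeasure P]
    (q p : Ω → ℝ≥0∞) (hq : Measurable q) (hp : Measurable p)
    (hQ : Q = ν.withDensity q) (hP : P = ν.withDensity p)
    {α : ℝ} (hα0 : 0 < α) (hα1 : α < 1) :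
    sSup {r : EReal | ∃ g : Ω → ℝ, Measurable g ∧ (∃ C, ∀ x, |g x| ≤ C) ∧
        r = (((α - 1)⁻¹ * Real.log (∫ x, Real.exp ((α - 1) * g x) ∂Q)
              - α⁻¹ * Real.log (∫ x, Real.exp (α * g x) ∂P) : ℝ) : EReal)}
      = ((α * (α - 1))⁻¹ : ℝ)
          * ENNReal.log (∫⁻ x in {x | p x ≠ 0}, (q x) ^ α * (p x) ^ (1 - α) ∂ν) := by
  subst hQ hP
  set c : ℝ := (α * (α - 1))⁻¹
  have hc : c ≤ 0 := inv_nonpos.2 (mul_nonpos_of_nonneg_of_nonpos hα0.le (by linarith))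
  have hobjective {g : Ω → ℝ} (hg : Measurable g) {C : ℝ} (hC : ∀ x, |g x| ≤ C) :=
    coe_renyiObjective_eq (Q := ν.withDensity q) (P := ν.withDensity p) hα0.ne' hα1.ne
      (integrable_exp_mul_of_mem_Icc hg.aemeasurable (ae_of_all _ fun x => abs_le.1 (hC x)))
      (integrable_exp_mul_of_mem_Icc hg.aemeasurable (ae_of_all _ fun x => abs_le.1 (hC x)))
  have hcont : Continuous fun x : ℝ≥0∞ => (c : EReal) * ENNReal.log x := by
    simpa only [Function.comp_def, ENNReal.logHomeomorph_apply, ENNReal.log_rpow] using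
      ENNReal.logHomeomorph.continuous.comp (ENNReal.continuous_rpow_const (y := c))
  rw [setLIntegral_ne_zero_rpow_mul_rpow hα1]
  refine le_antisymm (sSup_le ?_) ?_
  · rintro _ ⟨g, hg, ⟨C, hC⟩, rfl⟩
    rw [hobjective hg hC, mul_comm, mul_comm (c : EReal)]
    exact EReal.mul_le_mul_of_nonpos_right (ENNReal.log_monotone
      (lintegral_rpow_mul_rpow_le_tiltedMomentProduct ν hq hp hα0.le hα1.le hg))
      (EReal.coe_nonpos.2 hc)
  · refine le_of_tendsto ((hcont.tendsto _).comp (tendsto_tiltedMomentProduct_logRatioClamp ν hq hp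
      lintegral_ne_top_of_isFiniteMeasure_withDensity
      lintegral_ne_top_of_isFiniteMeasure_withDensity hα0 hα1))
      (Eventually.of_forall fun n => le_sSup ?_)
    have hbound (x : Ω) := abs_logRatioClamp_le n (q x) (p x)
    refine ⟨_, hq.logRatioClamp hp n, ⟨n, hbound⟩, ?_⟩
    exact (hobjective (hq.logRatioClamp hp n) hbound).symm

/-- For `α ∈ (0,1)`, the supremum over bounded measurable `g` of the
Rényi–Donsker–Varadhan objective equals `(1/(α(α-1))) log ∫_{p>0} q^α p^{1-α} dν`. -/
theorem renyi_sup_eq_alpha_lt_one {Ω : Type*} [MeasurableSpace Ω]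
    (Q P ν : Measure Ω) [IsProbabilityMeasure Q] [IsProbabilityMeasure P] [SigmaFinite ν]
    (q p : Ω → ℝ≥0∞) (hq : Measurable q) (hp : Measurable p)
    (hQ : Q = ν.withDensity q) (hP : P = ν.withDensity p)
    {α : ℝ} (hα0 : 0 < α) (hα1 : α < 1) :
    sSup {r : EReal | ∃ g : Ω → ℝ, Measurable g ∧ (∃ C, ∀ x, |g x| ≤ C) ∧
        r = (((α - 1)⁻¹ * Real.log (∫ x, Real.exp ((α - 1) * g x) ∂Q)
              - α⁻¹ * Real.log (∫ x, Real.exp (α * g x) ∂P) : ℝ) : EReal)}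
      = ((α * (α - 1))⁻¹ : ℝ)
          * ENNReal.log (∫⁻ x in {x | p x ≠ 0}, (q x) ^ α * (p x) ^ (1 - α) ∂ν) :=
  renyi_sup_eq_alpha_lt_one_general Q P ν q p hq hp hQ hP hα0 hα1
end

section
/- Let Ω be a metric space with Borel σ-algebra, Q, P Borel probability measures, and α ∈ ℝ \ {0,1}. Then the supremum of the Rényi–Donsker–Varadhan objective g ↦ (1/(α-1)) log ∫ e^{(α-1)g} dQ - (1/α) log ∫ e^{αg} dP over bounded continuous functions equals the supremum over bounded measurable functions. -/
/-!
For functions bounded by `C`, the map `h ↦ t⁻¹ log ∫ e^{t h} dμ` is `e^{2|t|C}`-Lipschitz for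
the `L¹(μ)` distance: `exp` is `e^{|t|C}`-Lipschitz on `(-∞, |t|C]`, and `∫ e^{t h} dμ ≥ e^{-|t|C}`,
where `log` is `e^{|t|C}`-Lipschitz (at `t = 0` the map is constant, as `0⁻¹ = 0`). So the
objective is `L¹(P + Q)`-continuous on such functions. In place of Lusin and Tietze we use that
bounded continuous functions are dense in `L¹(P + Q)` (finite measures on a metric space are weakly
regular); clamping an approximant of `g` to `[-C, C]` keeps it bounded by `C` without moving it
away from `g`.
-/

open MeasureTheory ProbabilityTheory Real

lemma abs_exp_sub_exp_le {a b M : ℝ} (ha : a ≤ M) (hb : b ≤ M) :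
    |exp a - exp b| ≤ exp M * |a - b| := by
  wlog hba : b ≤ a generalizing a b
  · rw [abs_sub_comm, abs_sub_comm a]
    exact this hb ha (le_of_not_ge hba)
  rw [abs_of_nonneg (sub_nonneg.2 (exp_le_exp.2 hba)), abs_of_nonneg (sub_nonneg.2 hba)]
  calc exp a - exp b = exp a * (1 - exp (b - a)) := by rw [mul_sub, mul_one, ← exp_add]; ring_nf
    _ ≤ exp a * (a - b) := by
        refine mul_le_mul_of_nonneg_left ?_ (exp_nonneg a); linarith [add_one_le_exp (b - a)]
    _ ≤ exp M * (a - b) := by gcongr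

lemma abs_log_sub_log_le {x y m : ℝ} (hm : 0 < m) (hx : m ≤ x) (hy : m ≤ y) :
    |log x - log y| ≤ m⁻¹ * |x - y| := by
  wlog hyx : y ≤ x generalizing x y
  · rw [abs_sub_comm, abs_sub_comm x]
    exact this hy hx (le_of_not_ge hyx)
  have hy0 : 0 < y := hm.trans_le hy
  rw [abs_of_nonneg (sub_nonneg.2 (log_le_log hy0 hyx)), abs_of_nonneg (sub_nonneg.2 hyx),
    ← log_div (hy0.trans_le hyx).ne' hy0.ne']
  calc log (x / y) ≤ x / y - 1 := log_le_sub_one_of_pos (div_pos (hy0.trans_le hyx) hy0)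
    _ = y⁻¹ * (x - y) := by field_simp
    _ ≤ m⁻¹ * (x - y) := by gcongr

lemma abs_mul_le_of_abs_le {a b C : ℝ} (hb : |b| ≤ C) : |a * b| ≤ |a| * C := by
  rw [abs_mul]; gcongr

section BoundedFunctions

variable {Ω : Type*} [MeasurableSpace Ω] {μ : Measure Ω} {X Y : Ω → ℝ} {C : ℝ}

lemma integrable_abs_sub_of_forall_abs_le [IsFiniteMeasure μ] (hX : AEMeasurable X μ)
    (hY : AEMeasurable Y μ) (hXC : ∀ ω, |X ω| ≤ C) (hYC : ∀ ω, |Y ω| ≤ C) :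
    Integrable (fun ω ↦ |X ω - Y ω|) μ :=
  (Integrable.of_bound (hX.sub hY).aestronglyMeasurable (C + C) (.of_forall fun ω ↦
    (abs_sub _ _).trans (add_le_add (hXC ω) (hYC ω)))).abs

lemma integrable_exp_mul_of_forall_abs_le [IsFiniteMeasure μ] (hX : AEMeasurable X μ)
    (hXC : ∀ ω, |X ω| ≤ C) (t : ℝ) : Integrable (fun ω ↦ exp (t * X ω)) μ :=
  integrable_exp_mul_of_mem_Icc hX (.of_forall fun ω ↦ abs_le.1 (hXC ω))

lemma exp_neg_le_mgf [IsProbabilityMeasure μ] (hX : AEMeasurable X μ)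
    (hXC : ∀ ω, |X ω| ≤ C) (t : ℝ) : exp (-(|t| * C)) ≤ mgf X μ t := by
  calc exp (-(|t| * C)) = ∫ _, exp (-(|t| * C)) ∂μ := by simp
    _ ≤ mgf X μ t :=
        integral_mono (integrable_const _) (integrable_exp_mul_of_forall_abs_le hX hXC t)
          fun ω ↦ exp_le_exp.2 (abs_le.1 (abs_mul_le_of_abs_le (hXC ω))).1

lemma abs_mgf_sub_mgf_le [IsFiniteMeasure μ] (hX : AEMeasurable X μ) (hY : AEMeasurable Y μ)
    (hXC : ∀ ω, |X ω| ≤ C) (hYC : ∀ ω, |Y ω| ≤ C) (t : ℝ) :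
    |mgf X μ t - mgf Y μ t| ≤ |t| * exp (|t| * C) * ∫ ω, |X ω - Y ω| ∂μ := by
  rw [mgf, mgf, ← integral_sub (integrable_exp_mul_of_forall_abs_le hX hXC t)
    (integrable_exp_mul_of_forall_abs_le hY hYC t), ← integral_const_mul]
  have hXY := (integrable_abs_sub_of_forall_abs_le hX hY hXC hYC).const_mul (|t| * exp (|t| * C))
  refine abs_integral_le_integral_abs.trans (integral_mono_of_nonneg
    (.of_forall fun _ ↦ abs_nonneg _) hXY (.of_forall fun ω ↦ ?_))
  calc |exp (t * X ω) - exp (t * Y ω)| ≤ exp (|t| * C) * |t * X ω - t * Y ω| :=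
        abs_exp_sub_exp_le (abs_le.1 (abs_mul_le_of_abs_le (hXC ω))).2
          (abs_le.1 (abs_mul_le_of_abs_le (hYC ω))).2
    _ = |t| * exp (|t| * C) * |X ω - Y ω| := by rw [← mul_sub, abs_mul]; ring

lemma abs_cgf_sub_cgf_le [IsProbabilityMeasure μ] (hX : AEMeasurable X μ) (hY : AEMeasurable Y μ)
    (hXC : ∀ ω, |X ω| ≤ C) (hYC : ∀ ω, |Y ω| ≤ C) (t : ℝ) :
    |cgf X μ t - cgf Y μ t| ≤ |t| * exp (2 * (|t| * C)) * ∫ ω, |X ω - Y ω| ∂μ := by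
  calc |cgf X μ t - cgf Y μ t| ≤ (exp (-(|t| * C)))⁻¹ * |mgf X μ t - mgf Y μ t| :=
        abs_log_sub_log_le (exp_pos _) (exp_neg_le_mgf hX hXC t) (exp_neg_le_mgf hY hYC t)
    _ ≤ (exp (-(|t| * C)))⁻¹ * (|t| * exp (|t| * C) * ∫ ω, |X ω - Y ω| ∂μ) := by
        gcongr; exact abs_mgf_sub_mgf_le hX hY hXC hYC t
    _ = |t| * exp (2 * (|t| * C)) * ∫ ω, |X ω - Y ω| ∂μ := by
        rw [exp_neg, inv_inv, two_mul, exp_add]; ring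

lemma abs_inv_mul_cgf_sub_le [IsProbabilityMeasure μ] (hX : AEMeasurable X μ)
    (hY : AEMeasurable Y μ) (hXC : ∀ ω, |X ω| ≤ C) (hYC : ∀ ω, |Y ω| ≤ C) (t : ℝ) :
    |t⁻¹ * cgf X μ t - t⁻¹ * cgf Y μ t| ≤ exp (2 * (|t| * C)) * ∫ ω, |X ω - Y ω| ∂μ := by
  rcases eq_or_ne t 0 with rfl | ht
  · simpa using integral_nonneg fun ω ↦ abs_nonneg (X ω - Y ω)
  calc |t⁻¹ * cgf X μ t - t⁻¹ * cgf Y μ t| = |t|⁻¹ * |cgf X μ t - cgf Y μ t| := by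
        rw [← mul_sub, abs_mul, abs_inv]
    _ ≤ |t|⁻¹ * (|t| * exp (2 * (|t| * C)) * ∫ ω, |X ω - Y ω| ∂μ) := by
        gcongr; exact abs_cgf_sub_cgf_le hX hY hXC hYC t
    _ = exp (2 * (|t| * C)) * ∫ ω, |X ω - Y ω| ∂μ := by
        field_simp

end BoundedFunctions

lemma exists_continuous_abs_le_integral_abs_sub_le {Ω : Type*} [TopologicalSpace Ω]
    [NormalSpace Ω] [MeasurableSpace Ω] [BorelSpace Ω] (μ : Measure Ω) [IsFiniteMeasure μ]
    [μ.WeaklyRegular] {g : Ω → ℝ} (hg : AEStronglyMeasurable g μ) {C : ℝ}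
    (hgC : ∀ x, |g x| ≤ C) {ε : ℝ} (hε : 0 < ε) :
    ∃ f : Ω → ℝ, Continuous f ∧ (∀ x, |f x| ≤ C) ∧ ∫ x, |f x - g x| ∂μ ≤ ε := by
  rcases isEmpty_or_nonempty Ω with hΩ | hΩ
  · exact ⟨0, continuous_const, isEmptyElim, by simp [Measure.eq_zero_of_isEmpty μ, hε.le]⟩
  have hC : -C ≤ C := by
    linarith [(abs_nonneg _).trans (hgC (Classical.arbitrary Ω))]
  have hgi : Integrable g μ := .of_bound hg C (.of_forall hgC)
  obtain ⟨f, hfg, hfi⟩ := hgi.exists_boundedContinuous_integral_sub_le hε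
  have hg_eq (x : Ω) : (Set.projIcc (-C) C hC (g x) : ℝ) = g x := by
    rw [Set.projIcc_of_mem hC (abs_le.1 (hgC x))]
  refine ⟨fun x ↦ Set.projIcc (-C) C hC (f x),
    continuous_subtype_val.comp (continuous_projIcc.comp f.continuous),
    fun x ↦ abs_le.2 (Set.projIcc (-C) C hC (f x)).2, le_trans ?_ hfg⟩
  refine integral_mono_of_nonneg (.of_forall fun _ ↦ abs_nonneg _) ?_ (.of_forall fun x ↦ ?_)
  · exact (hgi.sub hfi).norm
  · calc |(Set.projIcc (-C) C hC (f x) : ℝ) - g x|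
          = |(Set.projIcc (-C) C hC (f x) : ℝ) - Set.projIcc (-C) C hC (g x)| := by rw [hg_eq]
      _ ≤ |f x - g x| := Set.abs_projIcc_sub_projIcc hC
      _ = ‖g x - f x‖ := by rw [Real.norm_eq_abs, abs_sub_comm]

section RenyiDV

variable {Ω : Type*} [MeasurableSpace Ω]

noncomputable def renyiDV (Q P : Measure Ω) (α : ℝ) (g : Ω → ℝ) : ℝ :=
  (α - 1)⁻¹ * cgf g Q (α - 1) - α⁻¹ * cgf g P α

lemma abs_renyiDV_sub_le (Q P : Measure Ω) [IsProbabilityMeasure Q] [IsProbabilityMeasure P]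
    (α : ℝ) {f g : Ω → ℝ} {C : ℝ} (hf : Measurable f) (hg : Measurable g)
    (hfC : ∀ x, |f x| ≤ C) (hgC : ∀ x, |g x| ≤ C) :
    |renyiDV Q P α f - renyiDV Q P α g|
      ≤ (exp (2 * (|α - 1| * C)) + exp (2 * (|α| * C))) * ∫ x, |f x - g x| ∂(P + Q) := by
  have hmono {ν : Measure Ω} (hν : ν ≤ P + Q) : ∫ x, |f x - g x| ∂ν ≤ ∫ x, |f x - g x| ∂(P + Q) :=
    integral_mono_measure hν (.of_forall fun _ ↦ abs_nonneg _)
      (integrable_abs_sub_of_forall_abs_le hf.aemeasurable hg.aemeasurable hfC hgC)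
  calc |renyiDV Q P α f - renyiDV Q P α g|
      = |((α - 1)⁻¹ * cgf f Q (α - 1) - (α - 1)⁻¹ * cgf g Q (α - 1))
          - (α⁻¹ * cgf f P α - α⁻¹ * cgf g P α)| := by rw [renyiDV, renyiDV]; ring_nf
    _ ≤ |(α - 1)⁻¹ * cgf f Q (α - 1) - (α - 1)⁻¹ * cgf g Q (α - 1)|
          + |α⁻¹ * cgf f P α - α⁻¹ * cgf g P α| := abs_sub _ _
    _ ≤ exp (2 * (|α - 1| * C)) * ∫ x, |f x - g x| ∂Q
          + exp (2 * (|α| * C)) * ∫ x, |f x - g x| ∂P :=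
        add_le_add (abs_inv_mul_cgf_sub_le hf.aemeasurable hg.aemeasurable hfC hgC _)
          (abs_inv_mul_cgf_sub_le hf.aemeasurable hg.aemeasurable hfC hgC _)
    _ ≤ exp (2 * (|α - 1| * C)) * ∫ x, |f x - g x| ∂(P + Q)
          + exp (2 * (|α| * C)) * ∫ x, |f x - g x| ∂(P + Q) :=
        add_le_add (mul_le_mul_of_nonneg_left (hmono (Measure.le_add_left le_rfl)) (exp_nonneg _))
          (mul_le_mul_of_nonneg_left (hmono (Measure.le_add_right le_rfl)) (exp_nonneg _))
    _ = (exp (2 * (|α - 1| * C)) + exp (2 * (|α| * C))) * ∫ x, |f x - g x| ∂(P + Q) := by ring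

lemma exists_continuous_abs_renyiDV_sub_le [MetricSpace Ω] [BorelSpace Ω] (Q P : Measure Ω)
    [IsProbabilityMeasure Q] [IsProbabilityMeasure P] (α : ℝ) {g : Ω → ℝ} (hg : Measurable g)
    {C : ℝ} (hgC : ∀ x, |g x| ≤ C) {ε : ℝ} (hε : 0 < ε) :
    ∃ f : Ω → ℝ, Continuous f ∧ (∀ x, |f x| ≤ C) ∧
      |renyiDV Q P α f - renyiDV Q P α g| ≤ ε := by
  set L := exp (2 * (|α - 1| * C)) + exp (2 * (|α| * C))
  have hL : 0 < L := by positivity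
  obtain ⟨f, hf, hfC, hfg⟩ := exists_continuous_abs_le_integral_abs_sub_le (P + Q)
    hg.aestronglyMeasurable hgC (div_pos hε hL)
  refine ⟨f, hf, hfC, ?_⟩
  calc |renyiDV Q P α f - renyiDV Q P α g| ≤ L * ∫ x, |f x - g x| ∂(P + Q) :=
        abs_renyiDV_sub_le Q P α hf.measurable hg hfC hgC
    _ ≤ L * (ε / L) := by gcongr
    _ = ε := mul_div_cancel₀ ε hL.ne'

end RenyiDV

theorem renyi_sup_continuous_eq_sup_measurable_general {Ω : Type*} [MetricSpace Ω]
    [MeasurableSpace Ω] [BorelSpace Ω]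
    (Q P : Measure Ω) [IsProbabilityMeasure Q] [IsProbabilityMeasure P]
    {α : ℝ} :
    sSup {r : EReal | ∃ g : Ω → ℝ, Continuous g ∧ (∃ C, ∀ x, |g x| ≤ C) ∧
        r = (((α - 1)⁻¹ * Real.log (∫ x, Real.exp ((α - 1) * g x) ∂Q)
              - α⁻¹ * Real.log (∫ x, Real.exp (α * g x) ∂P) : ℝ) : EReal)}
      = sSup {r : EReal | ∃ g : Ω → ℝ, Measurable g ∧ (∃ C, ∀ x, |g x| ≤ C) ∧
        r = (((α - 1)⁻¹ * Real.log (∫ x, Real.exp ((α - 1) * g x) ∂Q)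
              - α⁻¹ * Real.log (∫ x, Real.exp (α * g x) ∂P) : ℝ) : EReal)} := by
  change sSup {r : EReal | ∃ g : Ω → ℝ, Continuous g ∧ (∃ C, ∀ x, |g x| ≤ C) ∧ r = renyiDV Q P α g}
    = sSup {r : EReal | ∃ g : Ω → ℝ, Measurable g ∧ (∃ C, ∀ x, |g x| ≤ C) ∧ r = renyiDV Q P α g}
  refine le_antisymm (sSup_le_sSup fun r ⟨g, hg, hgC, hr⟩ ↦ ⟨g, hg.measurable, hgC, hr⟩)
    (sSup_le ?_)
  rintro _ ⟨g, hg, ⟨C, hgC⟩, rfl⟩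
  refine EReal.ge_of_forall_gt_iff_ge.1 fun z hz ↦ ?_
  obtain ⟨f, hf, hfC, hfg⟩ := exists_continuous_abs_renyiDV_sub_le Q P α hg hgC
    (sub_pos.2 (EReal.coe_lt_coe_iff.1 hz))
  exact (EReal.coe_le_coe_iff.2 (by linarith [(abs_le.1 hfg).1])).trans
    (le_sSup ⟨f, hf, ⟨C, hfC⟩, rfl⟩)

/-- On a metric space with its Borel σ-algebra, the supremum of the
Rényi–Donsker–Varadhan objective over bounded continuous functions equals the supremum
over bounded measurable functions. -/
theorem renyi_sup_continuous_eq_sup_measurable {Ω : Type*} [MetricSpace Ω]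
    [MeasurableSpace Ω] [BorelSpace Ω]
    (Q P : Measure Ω) [IsProbabilityMeasure Q] [IsProbabilityMeasure P]
    {α : ℝ} (hα0 : α ≠ 0) (hα1 : α ≠ 1) :
    sSup {r : EReal | ∃ g : Ω → ℝ, Continuous g ∧ (∃ C, ∀ x, |g x| ≤ C) ∧
        r = (((α - 1)⁻¹ * Real.log (∫ x, Real.exp ((α - 1) * g x) ∂Q)
              - α⁻¹ * Real.log (∫ x, Real.exp (α * g x) ∂P) : ℝ) : EReal)}
      = sSup {r : EReal | ∃ g : Ω → ℝ, Measurable g ∧ (∃ C, ∀ x, |g x| ≤ C) ∧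
        r = (((α - 1)⁻¹ * Real.log (∫ x, Real.exp ((α - 1) * g x) ∂Q)
              - α⁻¹ * Real.log (∫ x, Real.exp (α * g x) ∂P) : ℝ) : EReal)} :=
  renyi_sup_continuous_eq_sup_measurable_general Q P
end

section
/- For any measurable g : Ω → ℝ with α ∈ (0,1), if both ∫ e^{(α-1)g} dQ < ∞ and ∫ e^{αg} dP < ∞, then (1/(α-1)) log ∫ e^{(α-1)g} dQ - (1/α) log ∫ e^{αg} dP ≤ R_α(Q‖P). -/
open MeasureTheory Real
open scoped ENNReal NNReal

/-! Tilting by `e^{(α-1)g}` and `e^{αg}` leaves the Rényi integrand unchanged,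
`q^α p^{1-α} = (e^{(α-1)g} q)^α (e^{αg} p)^{1-α}`, because the exponents cancel:
`(α-1)α + α(1-α) = 0`. Hölder's inequality with exponents `1/α` and `1/(1-α)` then bounds
`∫ q^α p^{1-α} dν` by `(∫ e^{(α-1)g} dQ)^α (∫ e^{αg} dP)^{1-α}`, and taking logarithms and
multiplying by the negative constant `1/(α(α-1))` gives the claim. -/

lemma ENNReal.rpow_mul_rpow_one_sub_eq_exp_tilt {α : ℝ} (hα0 : 0 ≤ α) (hα1 : α ≤ 1)
    (a b : ℝ≥0∞) (t : ℝ) :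
    a ^ α * b ^ (1 - α) =
      (ENNReal.ofReal (exp ((α - 1) * t)) * a) ^ α *
        (ENNReal.ofReal (exp (α * t)) * b) ^ (1 - α) := by
  rw [ENNReal.mul_rpow_of_nonneg _ _ hα0, ENNReal.mul_rpow_of_nonneg _ _ (sub_nonneg.2 hα1),
    ENNReal.ofReal_rpow_of_pos (exp_pos _), ENNReal.ofReal_rpow_of_pos (exp_pos _),
    ← exp_mul, ← exp_mul, mul_mul_mul_comm, ← ENNReal.ofReal_mul (exp_pos _).le, ← exp_add,
    show (α - 1) * t * α + α * t * (1 - α) = 0 by ring, exp_zero, ENNReal.ofReal_one, one_mul]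

lemma ENNReal.log_ofReal_rpow_mul_ofReal_rpow {A B : ℝ} (hA : 0 < A) (hB : 0 < B) (α β : ℝ) :
    ENNReal.log (ENNReal.ofReal A ^ α * ENNReal.ofReal B ^ β) =
      ((α * Real.log A + β * Real.log B : ℝ) : EReal) := by
  rw [ENNReal.log_mul_add, ENNReal.log_rpow, ENNReal.log_rpow, ENNReal.log_ofReal_of_pos hA,
    ENNReal.log_ofReal_of_pos hB]
  norm_cast

namespace MeasureTheory

variable {Ω : Type*} [MeasurableSpace Ω] {ν : Measure Ω}

lemma lintegral_ofReal_mul_eq_ofReal_integral_withDensity {q : Ω → ℝ≥0∞}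
    (hq : AEMeasurable q ν) {f : Ω → ℝ} (hfi : Integrable f (ν.withDensity q))
    (hf0 : 0 ≤ᵐ[ν.withDensity q] f) :
    ∫⁻ x, ENNReal.ofReal (f x) * q x ∂ν = ENNReal.ofReal (∫ x, f x ∂ν.withDensity q) := by
  rw [ofReal_integral_eq_lintegral_ofReal hfi hf0,
    lintegral_withDensity_eq_lintegral_mul₀' hq hfi.aemeasurable.ennreal_ofReal]
  exact lintegral_congr fun x => mul_comm _ _

theorem lintegral_rpow_mul_rpow_one_sub_le_exp_tilt {q p : Ω → ℝ≥0∞} (hq : Measurable q)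
    (hp : Measurable p) {α : ℝ} (hα0 : 0 ≤ α) (hα1 : α ≤ 1) {g : Ω → ℝ} (hg : Measurable g)
    (hintQ : Integrable (fun x => exp ((α - 1) * g x)) (ν.withDensity q))
    (hintP : Integrable (fun x => exp (α * g x)) (ν.withDensity p)) :
    ∫⁻ x, q x ^ α * p x ^ (1 - α) ∂ν ≤
      ENNReal.ofReal (∫ x, exp ((α - 1) * g x) ∂ν.withDensity q) ^ α *
        ENNReal.ofReal (∫ x, exp (α * g x) ∂ν.withDensity p) ^ (1 - α) := by
  have hmeas (c : ℝ) (r : Ω → ℝ≥0∞) (hr : Measurable r) :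
      AEMeasurable (fun x => ENNReal.ofReal (exp (c * g x)) * r x) ν :=
    ((measurable_exp.comp (hg.const_mul c)).ennreal_ofReal.mul hr).aemeasurable
  rw [← lintegral_ofReal_mul_eq_ofReal_integral_withDensity hq.aemeasurable hintQ
      (ae_of_all _ fun _ => (exp_pos _).le),
    ← lintegral_ofReal_mul_eq_ofReal_integral_withDensity hp.aemeasurable hintP
      (ae_of_all _ fun _ => (exp_pos _).le),
    lintegral_congr fun x =>
      ENNReal.rpow_mul_rpow_one_sub_eq_exp_tilt hα0 hα1 (q x) (p x) (g x)]
  exact ENNReal.lintegral_mul_norm_pow_le (hmeas _ q hq) (hmeas _ p hp) hα0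
    (sub_nonneg.2 hα1) (add_sub_cancel α 1)

end MeasureTheory

theorem renyi_lower_bound_unbounded_lt_one_general {Ω : Type*} [MeasurableSpace Ω]
    (Q P ν : Measure Ω) [IsProbabilityMeasure Q] [IsProbabilityMeasure P]
    (q p : Ω → ℝ≥0∞) (hq : Measurable q) (hp : Measurable p)
    (hQ : Q = ν.withDensity q) (hP : P = ν.withDensity p)
    {α : ℝ} (hα0 : 0 < α) (hα1 : α < 1)
    (g : Ω → ℝ) (hg : Measurable g)
    (hintQ : Integrable (fun x => Real.exp ((α - 1) * g x)) Q)
    (hintP : Integrable (fun x => Real.exp (α * g x)) P) :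
    (((α - 1)⁻¹ * Real.log (∫ x, Real.exp ((α - 1) * g x) ∂Q)
        - α⁻¹ * Real.log (∫ x, Real.exp (α * g x) ∂P) : ℝ) : EReal)
      ≤ ((α * (α - 1))⁻¹ : ℝ)
          * ENNReal.log (∫⁻ x in {x | p x ≠ 0}, (q x) ^ α * (p x) ^ (1 - α) ∂ν) := by
  have hA := integral_exp_pos hintQ
  have hB := integral_exp_pos hintP
  subst hQ hP
  set A := ∫ x, exp ((α - 1) * g x) ∂ν.withDensity q
  set B := ∫ x, exp (α * g x) ∂ν.withDensity p
  have hlog := ENNReal.log_le_log <| (setLIntegral_le_lintegral {x | p x ≠ 0} _).trans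
    (lintegral_rpow_mul_rpow_one_sub_le_exp_tilt hq hp hα0.le hα1.le hg hintQ hintP)
  rw [ENNReal.log_ofReal_rpow_mul_ofReal_rpow hA hB] at hlog
  have hc : (α * (α - 1))⁻¹ ≤ 0 :=
    inv_nonpos.2 (mul_nonpos_of_nonneg_of_nonpos hα0.le (by linarith))
  have hsplit : (α - 1)⁻¹ * Real.log A - α⁻¹ * Real.log B =
      (α * (α - 1))⁻¹ * (α * Real.log A + (1 - α) * Real.log B) := by
    field_simp [hα0.ne', sub_ne_zero.2 hα1.ne]
    ring
  rw [hsplit, EReal.coe_mul]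
  simpa only [mul_comm] using EReal.mul_le_mul_of_nonpos_right hlog (EReal.coe_nonpos.2 hc)

/-- For measurable `g` (possibly unbounded) and `α ∈ (0,1)`, if both
`∫ e^{(α-1)g} dQ < ∞` and `∫ e^{αg} dP < ∞`, then
`(1/(α-1)) log ∫ e^{(α-1)g} dQ - (1/α) log ∫ e^{αg} dP ≤ R_α(Q‖P)`,
the Rényi divergence being defined via a common dominating measure `ν`. -/
theorem renyi_lower_bound_unbounded_lt_one {Ω : Type*} [MeasurableSpace Ω]
    (Q P ν : Measure Ω) [IsProbabilityMeasure Q] [IsProbabilityMeasure P] [SigmaFinite ν]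
    (q p : Ω → ℝ≥0∞) (hq : Measurable q) (hp : Measurable p)
    (hQ : Q = ν.withDensity q) (hP : P = ν.withDensity p)
    {α : ℝ} (hα0 : 0 < α) (hα1 : α < 1)
    (g : Ω → ℝ) (hg : Measurable g)
    (hintQ : Integrable (fun x => Real.exp ((α - 1) * g x)) Q)
    (hintP : Integrable (fun x => Real.exp (α * g x)) P) :
    (((α - 1)⁻¹ * Real.log (∫ x, Real.exp ((α - 1) * g x) ∂Q)
        - α⁻¹ * Real.log (∫ x, Real.exp (α * g x) ∂P) : ℝ) : EReal)
      ≤ ((α * (α - 1))⁻¹ : ℝ)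
          * ENNReal.log (∫⁻ x in {x | p x ≠ 0}, (q x) ^ α * (p x) ^ (1 - α) ∂ν) :=
  renyi_lower_bound_unbounded_lt_one_general Q P ν q p hq hp hQ hP hα0 hα1 g hg hintQ hintP
end

section
/- Let P = μ_{θ_p} and Q = μ_{θ_q} belong to an exponential family dμ_θ = h(x) e^{κ(θ)·T(x) - β(θ)} dμ with Q ≪ P, dQ/dP > 0, and (dQ/dP)^α ∈ L¹(P). Then R_α(Q‖P) = sup over Δκ ∈ ℝ^k of {(1/(α-1)) log ∫ e^{(α-1)Δκ·T} dQ - (1/α) log ∫ e^{αΔκ·T} dP}, and the supremum is attained at Δκ = κ(θ_q) - κ(θ_p). -/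
open MeasureTheory Real
open scoped ENNReal NNReal BigOperators

/-! With `r = dQ/dP`, tilt `P` to the probability measure `ν ∝ r^α P` and put `φ = e^g / r`.
Up to the common factor `1 / ∫ r^α dP`, the integrals `∫ φ^(α-1) dν` and `∫ φ^α dν` are the two
integrals of the objective, so the inequality is the monotonicity `M_(α-1)(φ) ≤ M_α(φ)` of power
means, a consequence of Hölder's inequality. In the exponential family
`r = exp ((κ_q - κ_p)·T - (β_q - β_p))`, so at `g = (κ_q - κ_p)·T` the function `φ` is constant and
the two power means coincide. -/

noncomputable def powerMean {Ω : Type*} [MeasurableSpace Ω] (ν : Measure Ω) (φ : Ω → ℝ≥0∞)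
    (p : ℝ) : ℝ≥0∞ :=
  (∫⁻ x, φ x ^ p ∂ν) ^ p⁻¹

section PowerMean

variable {Ω : Type*} [MeasurableSpace Ω] {ν : Measure Ω} {φ : Ω → ℝ≥0∞} {p q : ℝ}

lemma powerMean_inv (ν : Measure Ω) (φ : Ω → ℝ≥0∞) (p : ℝ) :
    powerMean ν φ⁻¹ (-p) = (powerMean ν φ p)⁻¹ := by
  simp only [powerMean, Pi.inv_apply, ENNReal.inv_rpow, ENNReal.rpow_neg, inv_inv, inv_neg]

variable [IsProbabilityMeasure ν]

lemma powerMean_le_powerMean_of_pos (hφ : AEMeasurable φ ν) (hp : 0 < p) (hpq : p ≤ q) :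
    powerMean ν φ p ≤ powerMean ν φ q := by
  simpa [powerMean, eLpNorm'_eq_lintegral_enorm, one_div] using
    eLpNorm'_le_eLpNorm'_of_exponent_le hp hpq ν hφ.aestronglyMeasurable

lemma powerMean_le_powerMean_of_neg (hφ : AEMeasurable φ ν) (hpq : p ≤ q) (hq : q < 0) :
    powerMean ν φ p ≤ powerMean ν φ q := by
  have h := powerMean_le_powerMean_of_pos hφ.inv (neg_pos.2 hq) (neg_le_neg hpq)
  rwa [powerMean_inv, powerMean_inv, ENNReal.inv_le_inv] at h

lemma powerMean_le_powerMean_of_neg_of_pos (hφ : AEMeasurable φ ν) (hφ0 : ∀ᵐ x ∂ν, φ x ≠ 0)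
    (hφtop : ∀ᵐ x ∂ν, φ x ≠ ∞) (hp : p < 0) (hq : 0 < q) :
    powerMean ν φ p ≤ powerMean ν φ q := by
  have hqp : 0 < q - p := by linarith
  -- Hölder with weights `q / (q - p)` and `-p / (q - p)` makes the integrand `φ ^ 0 = 1`.
  have hholder := ENNReal.lintegral_mul_norm_pow_le (hφ.pow_const p) (hφ.pow_const q)
    (div_pos hq hqp).le (div_pos (neg_pos.2 hp) hqp).le (by field_simp; ring)
  have hone : ∫⁻ x, (φ x ^ p) ^ (q / (q - p)) * (φ x ^ q) ^ (-p / (q - p)) ∂ν = 1 := by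
    rw [← measure_univ (μ := ν), ← lintegral_one]
    refine lintegral_congr_ae ?_
    filter_upwards [hφ0, hφtop] with x h0 htop
    rw [← ENNReal.rpow_mul, ← ENNReal.rpow_mul, ← ENNReal.rpow_add _ _ h0 htop]
    field_simp
    simp
  have hs : 0 < (q - p) / (-p * q) := div_pos hqp (mul_pos (neg_pos.2 hp) hq)
  have h1 := ENNReal.one_le_rpow (hone ▸ hholder) hs
  have hp0 := hp.ne
  have hq0 := hq.ne'
  rw [ENNReal.mul_rpow_of_nonneg _ _ hs.le, ← ENNReal.rpow_mul, ← ENNReal.rpow_mul,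
    show q / (q - p) * ((q - p) / (-p * q)) = -p⁻¹ by field_simp,
    show -p / (q - p) * ((q - p) / (-p * q)) = q⁻¹ by field_simp] at h1
  have hA : (∫⁻ x, φ x ^ p ∂ν) ^ (-p⁻¹) ≠ 0 := by rintro h; simp [h] at h1
  have hB : (∫⁻ x, φ x ^ q ∂ν) ^ q⁻¹ ≠ 0 := by rintro h; simp [h] at h1
  have := (ENNReal.inv_le_iff_le_mul (fun _ => hA) (fun _ => hB)).2 h1
  rwa [ENNReal.rpow_neg, inv_inv] at this

theorem powerMean_le_powerMean (hφ : AEMeasurable φ ν) (hφ0 : ∀ᵐ x ∂ν, φ x ≠ 0)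
    (hφtop : ∀ᵐ x ∂ν, φ x ≠ ∞) (hpq : p < q) (hp : p ≠ 0) (hq : q ≠ 0) :
    powerMean ν φ p ≤ powerMean ν φ q := by
  rcases hp.lt_or_gt with hp | hp
  · rcases hq.lt_or_gt with hq | hq
    · exact powerMean_le_powerMean_of_neg hφ hpq.le hq
    · exact powerMean_le_powerMean_of_neg_of_pos hφ hφ0 hφtop hp hq
  · exact powerMean_le_powerMean_of_pos hφ hp hpq.le

end PowerMean

lemma mul_log_sub_mul_log_le_of_rpow_le {x y : ℝ≥0∞} {z u v : ℝ} (hx : x ≠ 0) (hy : y ≠ 0)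
    (hz : 0 < z) (h : ((ENNReal.ofReal z)⁻¹ * x) ^ u ≤ ((ENNReal.ofReal z)⁻¹ * y) ^ v) :
    (u : EReal) * ENNReal.log x - v * ENNReal.log y ≤ (((u - v) * Real.log z : ℝ) : EReal) := by
  set w := ENNReal.ofReal z
  have hw0 : w ≠ 0 := by simpa [w] using hz
  have hwtop : w ≠ ∞ := ENNReal.ofReal_ne_top
  have hwinv : w⁻¹ ≠ 0 := ENNReal.inv_ne_zero.2 hwtop
  rw [ENNReal.mul_rpow_of_ne_zero hwinv hx, ENNReal.mul_rpow_of_ne_zero hwinv hy,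
    ENNReal.inv_rpow, ENNReal.inv_rpow] at h
  have hle : x ^ u ≤ w ^ (u - v) * y ^ v :=
    calc x ^ u = w ^ u * ((w ^ u)⁻¹ * x ^ u) := by
          rw [← mul_assoc, ENNReal.mul_inv_cancel (by simp [hw0, hwtop]) (by simp [hw0, hwtop]),
            one_mul]
      _ ≤ w ^ u * ((w ^ v)⁻¹ * y ^ v) := by gcongr
      _ = w ^ (u - v) * y ^ v := by rw [← mul_assoc, ENNReal.rpow_sub _ _ hw0 hwtop, div_eq_mul_inv]
  have hlog := ENNReal.log_monotone hle
  rw [ENNReal.log_mul_add, ENNReal.log_rpow, ENNReal.log_rpow, ENNReal.log_rpow,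
    ENNReal.log_ofReal_of_pos hz, ← EReal.coe_mul] at hlog
  exact EReal.sub_le_of_le_add hlog

lemma lintegral_ofReal_exp_ne_zero {Ω : Type*} [MeasurableSpace Ω] {μ : Measure Ω} [NeZero μ]
    {f : Ω → ℝ} (hf : AEMeasurable f μ) : ∫⁻ x, ENNReal.ofReal (exp (f x)) ∂μ ≠ 0 := by
  rw [Ne, lintegral_eq_zero_iff' (by fun_prop)]
  intro h
  obtain ⟨x, hx⟩ := h.exists
  simp only [Pi.zero_apply, ENNReal.ofReal_eq_zero] at hx
  exact (exp_pos _).not_ge hx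

noncomputable def renyiObjective {Ω : Type*} [MeasurableSpace Ω] (α : ℝ) (P Q : Measure Ω)
    (g : Ω → ℝ) : EReal :=
  (((α - 1)⁻¹ : ℝ) : EReal) * ENNReal.log (∫⁻ x, ENNReal.ofReal (exp ((α - 1) * g x)) ∂Q)
    - ((α⁻¹ : ℝ) : EReal) * ENNReal.log (∫⁻ x, ENNReal.ofReal (exp (α * g x)) ∂P)

noncomputable def renyiDiv {Ω : Type*} [MeasurableSpace Ω] (α : ℝ) (P Q : Measure Ω) : EReal :=
  (((α * (α - 1))⁻¹ * Real.log (∫ x, (Q.rnDeriv P x).toReal ^ α ∂P) : ℝ) : EReal)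

section Renyi

variable {Ω : Type*} [MeasurableSpace Ω] {P Q : Measure Ω} {α : ℝ}

lemma toReal_rnDeriv_rpow_ae_eq (hpos : ∀ᵐ x ∂P, 0 < (Q.rnDeriv P x).toReal) :
    (fun x => (Q.rnDeriv P x).toReal ^ α)
      =ᵐ[P] fun x => exp (α * Real.log (Q.rnDeriv P x).toReal) := by
  filter_upwards [hpos] with x hx
  rw [rpow_def_of_pos hx, mul_comm]

lemma lintegral_exp_add_log_rnDeriv [SigmaFinite P] [SigmaFinite Q] (hQP : Q ≪ P)
    (hpos : ∀ᵐ x ∂P, 0 < (Q.rnDeriv P x).toReal) {f : Ω → ℝ} (hf : Measurable f) :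
    ∫⁻ x, ENNReal.ofReal (exp (f x + Real.log (Q.rnDeriv P x).toReal)) ∂P
      = ∫⁻ x, ENNReal.ofReal (exp (f x)) ∂Q := by
  rw [← lintegral_rnDeriv_mul hQP (by fun_prop)]
  refine lintegral_congr_ae ?_
  filter_upwards [hpos, Measure.rnDeriv_ne_top Q P] with x hx hx'
  rw [exp_add, exp_log hx, ENNReal.ofReal_mul (exp_pos _).le, ENNReal.ofReal_toReal hx', mul_comm]

variable [IsProbabilityMeasure P] [IsProbabilityMeasure Q]

theorem renyiObjective_le_renyiDiv (hα0 : α ≠ 0) (hα1 : α ≠ 1) (hQP : Q ≪ P)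
    (hpos : ∀ᵐ x ∂P, 0 < (Q.rnDeriv P x).toReal)
    (hint : Integrable (fun x => (Q.rnDeriv P x).toReal ^ α) P) {g : Ω → ℝ} (hg : Measurable g) :
    renyiObjective α P Q g ≤ renyiDiv α P Q := by
  set ℓ := fun x => Real.log (Q.rnDeriv P x).toReal
  have hℓ : Measurable ℓ := (Measure.measurable_rnDeriv Q P).ennreal_toReal.log
  have hint' : Integrable (fun x => exp (α * ℓ x)) P :=
    hint.congr (toReal_rnDeriv_rpow_ae_eq hpos)
  set Z := ∫ x, (Q.rnDeriv P x).toReal ^ α ∂P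
  have hZ : Z = ∫ x, exp (α * ℓ x) ∂P := integral_congr_ae (toReal_rnDeriv_rpow_ae_eq hpos)
  have hZpos : 0 < Z := hZ ▸ integral_exp_pos hint'
  set ν := P.tilted fun x => α * ℓ x
  have : IsProbabilityMeasure ν := isProbabilityMeasure_tilted hint'
  set φ := fun x => ENNReal.ofReal (exp (g x - ℓ x))
  have hmean : ∀ s : ℝ, ∫⁻ x, φ x ^ s ∂ν
      = (ENNReal.ofReal Z)⁻¹ * ∫⁻ x, ENNReal.ofReal (exp (s * g x + (α - s) * ℓ x)) ∂P := by
    intro s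
    rw [lintegral_tilted, ← hZ, ← lintegral_const_mul _ (by fun_prop)]
    refine lintegral_congr fun x => ?_
    rw [ENNReal.ofReal_rpow_of_pos (exp_pos _), ← exp_mul, ENNReal.ofReal_div_of_pos hZpos,
      ENNReal.div_eq_inv_mul, mul_assoc, ← ENNReal.ofReal_mul (exp_pos _).le, ← exp_add]
    ring_nf
  have hA : ∫⁻ x, φ x ^ (α - 1) ∂ν
      = (ENNReal.ofReal Z)⁻¹ * ∫⁻ x, ENNReal.ofReal (exp ((α - 1) * g x)) ∂Q := by
    rw [hmean, ← lintegral_exp_add_log_rnDeriv hQP hpos (by fun_prop)]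
    simp only [sub_sub_cancel, one_mul, ℓ]
  have hB : ∫⁻ x, φ x ^ α ∂ν
      = (ENNReal.ofReal Z)⁻¹ * ∫⁻ x, ENNReal.ofReal (exp (α * g x)) ∂P := by
    simp only [hmean, sub_self, zero_mul, add_zero]
  have hφ : Measurable φ := by fun_prop
  have hmono := powerMean_le_powerMean (ν := ν) hφ.aemeasurable
    (ae_of_all _ fun x => by simp [φ, exp_pos]) (ae_of_all _ fun x => ENNReal.ofReal_ne_top)
    (sub_one_lt α) (sub_ne_zero.2 hα1) hα0
  rw [powerMean, powerMean, hA, hB] at hmono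
  have hcoef : (α - 1)⁻¹ - α⁻¹ = (α * (α - 1))⁻¹ := by
    field_simp [sub_ne_zero.2 hα1]
    ring
  have := mul_log_sub_mul_log_le_of_rpow_le (lintegral_ofReal_exp_ne_zero (by fun_prop))
    (lintegral_ofReal_exp_ne_zero (by fun_prop)) hZpos hmono
  rwa [hcoef] at this

theorem renyiObjective_eq_renyiDiv (hα0 : α ≠ 0) (hα1 : α ≠ 1) (hQP : Q ≪ P)
    (hint : Integrable (fun x => (Q.rnDeriv P x).toReal ^ α) P) {g : Ω → ℝ} (hg : Measurable g)
    {c : ℝ} (hr : ∀ᵐ x ∂P, (Q.rnDeriv P x).toReal = exp (g x - c)) :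
    renyiObjective α P Q g = renyiDiv α P Q := by
  have hpos : ∀ᵐ x ∂P, 0 < (Q.rnDeriv P x).toReal := hr.mono fun x hx => hx ▸ exp_pos _
  set ℓ := fun x => Real.log (Q.rnDeriv P x).toReal
  have hℓ : ∀ᵐ x ∂P, ℓ x = g x - c := hr.mono fun x hx => by simp only [ℓ, hx, log_exp]
  have hint' : Integrable (fun x => exp (α * ℓ x)) P :=
    hint.congr (toReal_rnDeriv_rpow_ae_eq hpos)
  set Z := ∫ x, (Q.rnDeriv P x).toReal ^ α ∂P
  have hZ : Z = ∫ x, exp (α * ℓ x) ∂P := integral_congr_ae (toReal_rnDeriv_rpow_ae_eq hpos)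
  have hZpos : 0 < Z := hZ ▸ integral_exp_pos hint'
  have hscale : ∀ t : ℝ, ∀ F : Ω → ℝ, (∀ᵐ x ∂P, F x = t + α * ℓ x) →
      ∫⁻ x, ENNReal.ofReal (exp (F x)) ∂P = ENNReal.ofReal (exp t) * ENNReal.ofReal Z := by
    intro t F hF
    rw [hZ, ofReal_integral_eq_lintegral_ofReal hint' (ae_of_all _ fun _ => (exp_pos _).le),
      ← lintegral_const_mul' _ _ ENNReal.ofReal_ne_top]
    refine lintegral_congr_ae ?_
    filter_upwards [hF] with x hx
    rw [hx, exp_add, ENNReal.ofReal_mul (exp_pos _).le]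
  have hA : ∫⁻ x, ENNReal.ofReal (exp ((α - 1) * g x)) ∂Q
      = ENNReal.ofReal (exp ((α - 1) * c)) * ENNReal.ofReal Z := by
    rw [← lintegral_exp_add_log_rnDeriv hQP hpos (by fun_prop)]
    refine hscale _ _ (hℓ.mono fun x hx => ?_)
    simp only [ℓ] at hx ⊢
    rw [hx]
    ring
  have hB : ∫⁻ x, ENNReal.ofReal (exp (α * g x)) ∂P
      = ENNReal.ofReal (exp (α * c)) * ENNReal.ofReal Z :=
    hscale _ _ (hℓ.mono fun x hx => by rw [hx]; ring)
  simp only [renyiObjective, renyiDiv, hA, hB, ENNReal.log_mul_add,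
    ENNReal.log_ofReal_of_pos (exp_pos _), ENNReal.log_ofReal_of_pos hZpos, log_exp]
  norm_cast
  field_simp [sub_ne_zero.2 hα1]
  ring

end Renyi

lemma withDensity_ofReal_mul_exp_add {Ω : Type*} [MeasurableSpace Ω] (μ : Measure Ω)
    {h a d : Ω → ℝ} (hh : Measurable h) (ha : Measurable a) (hd : Measurable d) :
    μ.withDensity (fun x => ENNReal.ofReal (h x * exp (a x + d x)))
      = (μ.withDensity fun x => ENNReal.ofReal (h x * exp (a x))).withDensity
          fun x => ENNReal.ofReal (exp (d x)) := by
  rw [← withDensity_mul μ (by fun_prop) (by fun_prop)]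
  congr with x
  rw [Pi.mul_apply, ← ENNReal.ofReal_mul' (exp_pos _).le, exp_add, mul_assoc]

theorem renyi_exponential_family_variational_general {Ω Θ : Type*} [MeasurableSpace Ω] {k : ℕ}
    (μ : Measure Ω)
    (T : Ω → Fin k → ℝ) (hT : Measurable T) (h : Ω → ℝ) (hh : Measurable h)
    (κ : Θ → Fin k → ℝ) (β : Θ → ℝ) (θp θq : Θ)
    (P Q : Measure Ω)
    (hP : P = μ.withDensity (fun x => ENNReal.ofReal
        (h x * Real.exp ((∑ i, κ θp i * T x i) - β θp))))
    (hQ : Q = μ.withDensity (fun x => ENNReal.ofReal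
        (h x * Real.exp ((∑ i, κ θq i * T x i) - β θq))))
    [IsProbabilityMeasure P] [IsProbabilityMeasure Q]
    {α : ℝ} (hα0 : α ≠ 0) (hα1 : α ≠ 1)
    (hint : Integrable (fun x => (Q.rnDeriv P x).toReal ^ α) P) :
    (∀ Δκ : Fin k → ℝ,
        (((α - 1)⁻¹ : ℝ) : EReal) * ENNReal.log
            (∫⁻ x, ENNReal.ofReal (Real.exp ((α - 1) * ∑ i, Δκ i * T x i)) ∂Q)
          - ((α⁻¹ : ℝ) : EReal) * ENNReal.log
              (∫⁻ x, ENNReal.ofReal (Real.exp (α * ∑ i, Δκ i * T x i)) ∂P)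
        ≤ (((α * (α - 1))⁻¹ * Real.log (∫ x, (Q.rnDeriv P x).toReal ^ α ∂P) : ℝ) : EReal))
    ∧ (((α - 1)⁻¹ : ℝ) : EReal) * ENNReal.log
          (∫⁻ x, ENNReal.ofReal (Real.exp ((α - 1) * ∑ i, (κ θq i - κ θp i) * T x i)) ∂Q)
        - ((α⁻¹ : ℝ) : EReal) * ENNReal.log
            (∫⁻ x, ENNReal.ofReal (Real.exp (α * ∑ i, (κ θq i - κ θp i) * T x i)) ∂P)
      = (((α * (α - 1))⁻¹ * Real.log (∫ x, (Q.rnDeriv P x).toReal ^ α ∂P) : ℝ) : EReal) := by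
  set g := fun x => ∑ i, (κ θq i - κ θp i) * T x i
  set c := β θq - β θp
  have hQ_density : Q = P.withDensity fun x => ENNReal.ofReal (exp (g x - c)) := by
    rw [hP, ← withDensity_ofReal_mul_exp_add μ hh (by fun_prop) (by fun_prop), hQ]
    congr with x
    simp only [g, c, sub_mul, Finset.sum_sub_distrib]
    ring_nf
  have hr : ∀ᵐ x ∂P, (Q.rnDeriv P x).toReal = exp (g x - c) := by
    filter_upwards [hQ_density ▸ Measure.rnDeriv_withDensity P (by fun_prop)] with x hx
    rw [hx, ENNReal.toReal_ofReal (exp_pos _).le]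
  have hQP : Q ≪ P := hQ_density ▸ withDensity_absolutelyContinuous P _
  have hpos : ∀ᵐ x ∂P, 0 < (Q.rnDeriv P x).toReal := hr.mono fun x hx => hx ▸ exp_pos _
  exact ⟨fun Δκ => renyiObjective_le_renyiDiv hα0 hα1 hQP hpos hint (by fun_prop),
    renyiObjective_eq_renyiDiv hα0 hα1 hQP hint (by fun_prop) hr⟩

/-- For members `P = μ_{θ_p}`, `Q = μ_{θ_q}` of an exponential family
`dμ_θ = h e^{κ(θ)·T - β(θ)} dμ` with `Q ≪ P`, `dQ/dP > 0` and `(dQ/dP)^α ∈ L¹(P)`,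
the Rényi divergence equals the supremum over `Δκ ∈ ℝ^k` of the Rényi–Donsker–Varadhan
objective evaluated at `g = Δκ·T`, attained at `Δκ = κ(θ_q) - κ(θ_p)`. -/
theorem renyi_exponential_family_variational {Ω Θ : Type*} [MeasurableSpace Ω] {k : ℕ}
    (μ : Measure Ω) [SigmaFinite μ]
    (T : Ω → Fin k → ℝ) (hT : Measurable T) (h : Ω → ℝ) (hh : Measurable h) (hh0 : 0 ≤ h)
    (κ : Θ → Fin k → ℝ) (β : Θ → ℝ) (θp θq : Θ)
    (P Q : Measure Ω)
    (hP : P = μ.withDensity (fun x => ENNReal.ofReal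
        (h x * Real.exp ((∑ i, κ θp i * T x i) - β θp))))
    (hQ : Q = μ.withDensity (fun x => ENNReal.ofReal
        (h x * Real.exp ((∑ i, κ θq i * T x i) - β θq))))
    [IsProbabilityMeasure P] [IsProbabilityMeasure Q]
    {α : ℝ} (hα0 : α ≠ 0) (hα1 : α ≠ 1) (hQP : Q ≪ P)
    (hpos : ∀ᵐ x ∂P, 0 < (Q.rnDeriv P x).toReal)
    (hint : Integrable (fun x => (Q.rnDeriv P x).toReal ^ α) P) :
    (∀ Δκ : Fin k → ℝ,
        (((α - 1)⁻¹ : ℝ) : EReal) * ENNReal.log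
            (∫⁻ x, ENNReal.ofReal (Real.exp ((α - 1) * ∑ i, Δκ i * T x i)) ∂Q)
          - ((α⁻¹ : ℝ) : EReal) * ENNReal.log
              (∫⁻ x, ENNReal.ofReal (Real.exp (α * ∑ i, Δκ i * T x i)) ∂P)
        ≤ (((α * (α - 1))⁻¹ * Real.log (∫ x, (Q.rnDeriv P x).toReal ^ α ∂P) : ℝ) : EReal))
    ∧ (((α - 1)⁻¹ : ℝ) : EReal) * ENNReal.log
          (∫⁻ x, ENNReal.ofReal (Real.exp ((α - 1) * ∑ i, (κ θq i - κ θp i) * T x i)) ∂Q)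
        - ((α⁻¹ : ℝ) : EReal) * ENNReal.log
            (∫⁻ x, ENNReal.ofReal (Real.exp (α * ∑ i, (κ θq i - κ θp i) * T x i)) ∂P)
      = (((α * (α - 1))⁻¹ * Real.log (∫ x, (Q.rnDeriv P x).toReal ^ α ∂P) : ℝ) : EReal) :=
  renyi_exponential_family_variational_general μ T hT h hh κ β θp θq P Q hP hQ hα0 hα1 hint
end
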